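/- The implicit function ỹ(x) defined by ln(1 + ỹ(x)/x) − 1/(1 + ỹ(x)/x) = −1 + ln(n) − ln(x), for 0 < x ≤ n with ỹ(n) = 0, is a solution of the ordinary differential equation dy/dx = −x/(2x + y). -/

import Mathlib

/-!
With `u = 1 + y / x` the defining equation reads `F (u x) = -1 + log n - log x` for
`F v = log v - 1 / v`, which is strictly increasing on `(0, ∞)` with `F' v = 1 / v + 1 / v²`.
Since `F` is injective there, `u` coincides near each point with `G ∘ c`, where `G` is the local
inverse of `F` and `c x = -1 + log n - log x`; this gives differentiability of `u` without any
a priori regularity of `y`, and `u' = -u² / (x (u + 1))`. Then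
`y' = (u - 1) + x u' = -1 / (u + 1) = -x / (2 x + y)`.
-/

open Set Filter Topology

theorem HasStrictDerivAt.hasDerivAt_of_eventually_comp_eq {𝕜 : Type*}
    [NontriviallyNormedField 𝕜] [CompleteSpace 𝕜] {F u c : 𝕜 → 𝕜} {s : Set 𝕜}
    {F' c' x₀ : 𝕜} (hF : HasStrictDerivAt F F' (u x₀)) (hF' : F' ≠ 0)
    (hs : s ∈ 𝓝 (u x₀)) (hinj : InjOn F s) (hus : ∀ᶠ x in 𝓝 x₀, u x ∈ s)
    (hFu : ∀ᶠ x in 𝓝 x₀, F (u x) = c x) (hc : HasDerivAt c c' x₀) :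
    HasDerivAt u (F'⁻¹ * c') x₀ := by
  set G := hF.localInverse F F' (u x₀) hF'
  have hcx₀ : c x₀ = F (u x₀) := hFu.self_of_nhds.symm
  have hG : HasDerivAt G F'⁻¹ (c x₀) := hcx₀ ▸ (hF.to_localInverse hF').hasDerivAt
  have hc_tendsto : Tendsto c (𝓝 x₀) (𝓝 (F (u x₀))) := hcx₀ ▸ hc.continuousAt.tendsto
  have hFG : ∀ᶠ x in 𝓝 x₀, F (G (c x)) = c x :=
    hc_tendsto.eventually (hF.hasStrictFDerivAt_equiv hF').eventually_right_inverse
  have hGs : ∀ᶠ x in 𝓝 x₀, G (c x) ∈ s := by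
    have hGF : G (F (u x₀)) = u x₀ :=
      (hF.hasStrictFDerivAt_equiv hF').localInverse_apply_image
    have hG_cont : ContinuousAt G (F (u x₀)) := hcx₀ ▸ hG.continuousAt
    exact hc_tendsto.eventually (hG_cont.preimage_mem_nhds (by rwa [hGF]))
  have hGc_eq : (fun x => G (c x)) =ᶠ[𝓝 x₀] u := by
    filter_upwards [hFG, hGs, hus, hFu] with x hFGx hGsx husx hFux
    exact hinj hGsx husx (hFGx.trans hFux.symm)
  exact (hG.comp x₀ hc).congr_of_eventuallyEq hGc_eq.symm

theorem hasStrictDerivAt_log_sub_one_div {u : ℝ} (hu : u ≠ 0) :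
    HasStrictDerivAt (fun v => Real.log v - 1 / v) (u⁻¹ + (u ^ 2)⁻¹) u := by
  simp only [one_div, ← sub_neg_eq_add _ (u ^ 2)⁻¹]
  exact (Real.hasStrictDerivAt_log hu).sub (hasStrictDerivAt_inv hu)

theorem strictMonoOn_log_sub_one_div : StrictMonoOn (fun v => Real.log v - 1 / v) (Ioi 0) :=
  fun _ hu _ _ huv => sub_lt_sub (Real.log_lt_log hu huv) (one_div_lt_one_div_of_lt hu huv)

theorem implicit_solution_of_ode_general (n : ℝ) (y : ℝ → ℝ)
    (hy_nonneg : ∀ x ∈ Ioc (0 : ℝ) n, 0 ≤ y x)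
    (hy_eq : ∀ x ∈ Ioc (0 : ℝ) n,
      Real.log (1 + y x / x) - 1 / (1 + y x / x) = -1 + Real.log n - Real.log x) :
    ∀ x ∈ Ioo (0 : ℝ) n, HasDerivAt y (-x / (2 * x + y x)) x := by
  intro x₀ hx₀
  set u : ℝ → ℝ := fun x => 1 + y x / x
  have hnear : ∀ᶠ x in 𝓝 x₀, x ∈ Ioc 0 n :=
    mem_of_superset (isOpen_Ioo.mem_nhds hx₀) Ioo_subset_Ioc_self
  have hu_pos : ∀ x ∈ Ioc 0 n, 0 < u x := fun x hx => by
    have := hy_nonneg x hx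
    have := hx.1
    positivity
  have hu₀ : 0 < u x₀ := hu_pos x₀ (Ioo_subset_Ioc_self hx₀)
  have hc : HasDerivAt (fun x => -1 + Real.log n - Real.log x) (-x₀⁻¹) x₀ := by
    simpa using (Real.hasDerivAt_log hx₀.1.ne').const_sub (-1 + Real.log n)
  have hu : HasDerivAt u (((u x₀)⁻¹ + (u x₀ ^ 2)⁻¹)⁻¹ * -x₀⁻¹) x₀ :=
    (hasStrictDerivAt_log_sub_one_div hu₀.ne').hasDerivAt_of_eventually_comp_eq
      (by positivity) (Ioi_mem_nhds hu₀) strictMonoOn_log_sub_one_div.injOn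
      (hnear.mono hu_pos) (hnear.mono hy_eq) hc
  have hy : (fun x => x * (u x - 1)) =ᶠ[𝓝 x₀] y := hnear.mono fun x hx => by
    simp only [u]
    field_simp [hx.1.ne']
    ring
  refine (((hasDerivAt_id x₀).mul (hu.sub_const 1)).congr_of_eventuallyEq hy.symm).congr_deriv ?_
  rw [← hy.self_of_nhds, id, show 2 * x₀ + x₀ * (u x₀ - 1) = x₀ * (u x₀ + 1) by ring]
  have := hx₀.1
  field_simp
  ring

theorem implicit_solution_of_ode (n : ℝ) (hn : 0 < n) (y : ℝ → ℝ)
    (hy_nonneg : ∀ x ∈ Ioc (0 : ℝ) n, 0 ≤ y x)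
    (hy_eq : ∀ x ∈ Ioc (0 : ℝ) n,
      Real.log (1 + y x / x) - 1 / (1 + y x / x) = -1 + Real.log n - Real.log x)
    (hyn : y n = 0) :
    ∀ x ∈ Ioo (0 : ℝ) n, HasDerivAt y (-x / (2 * x + y x)) x :=
  implicit_solution_of_ode_general n y hy_nonneg hy_eq
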